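/- For real numbers η ∈ (0,1) and probability measure μ on a finite measure space E (with Lebesgue measure), if F ⊆ E is measurable with μ(F) ≥ 1 - η, then Ent(μ) ≤ (1-η)·log(Leb(F)) + η·log(Leb(E)) - η log η - (1-η) log(1-η), provided Leb(F) ≤ Leb(E). -/

import Mathlib

/-!
Split `∫ f log f` along `E = F ∪ (E \ F)`. On each piece, Jensen's inequality for `x log x`
bounds the entropy by that of the uniform density with the same mass `m` on a set of volume `V`,
namely `m log V - m log m`. What remains is an inequality between real numbers: for masses
`a ≥ 1 - η` and `b = 1 - a` on volumes `v` and `w`, the quantity `a log (v / a) + b log (w / b)`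
is at most `(1 - η) log v + η log (v + w) - η log η - (1 - η) log (1 - η)`. If `v` occupies at
least the fraction `1 - η` of `v + w`, Gibbs' inequality bounds it by `log (v + w)`, which is
already small enough. Otherwise Gibbs' inequality against the weights `(1 - η, η)` bounds it by
`a X + b Y` with `X = log (v / (1 - η)) ≤ Y = log (w / η)`, and this only grows as mass moves
from `a` to `b`, up to `b = η`.
-/

open MeasureTheory Real

namespace Real

theorem mul_log_sub_mul_log_le_sub {p c : ℝ} (hp : 0 ≤ p) (hc : 0 ≤ c)
    (hpc : c = 0 → p = 0) :
    p * log c - p * log p ≤ c - p := by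
  obtain rfl | hp := hp.eq_or_lt
  · simpa using hc
  have hc_pos : 0 < c := hc.lt_of_ne fun h => hp.ne' (hpc h.symm)
  have h := log_le_sub_one_of_pos (div_pos hc_pos hp)
  rw [log_div hc_pos.ne' hp.ne'] at h
  calc p * log c - p * log p = p * (log c - log p) := by ring
    _ ≤ p * (c / p - 1) := by gcongr
    _ = c - p := by field_simp

theorem gibbs_le_log_add {a b x y : ℝ} (ha : 0 ≤ a) (hb : 0 ≤ b) (hab : a + b = 1)
    (hx : 0 < x) (hy : 0 ≤ y) (hby : y = 0 → b = 0) :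
    a * log x - a * log a + (b * log y - b * log b) ≤ log (x + y) := by
  have hS : 0 < x + y := by linarith
  have hxS := mul_log_sub_mul_log_le_sub ha (div_pos hx hS).le fun h => by
    simp [hx.ne', hS.ne'] at h
  have hyS := mul_log_sub_mul_log_le_sub hb (div_nonneg hy hS.le) fun h => by
    simp only [div_eq_zero_iff, hS.ne', or_false] at h; exact hby h
  have hlog_x : a * log (x / (x + y)) = a * log x - a * log (x + y) := by
    rw [log_div hx.ne' hS.ne']; ring
  have hlog_y : b * log (y / (x + y)) = b * log y - b * log (x + y) := by
    obtain rfl | hy := hy.eq_or_lt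
    · simp [hby rfl]
    · rw [log_div hy.ne' hS.ne']; ring
  have hsum : x / (x + y) + y / (x + y) = 1 := by field_simp
  have hweights : a * log (x + y) + b * log (x + y) = log (x + y) := by
    rw [← add_mul, hab, one_mul]
  linarith

theorem split_entropy_le_of_mass_ge {η a b v w : ℝ} (hη0 : 0 < η) (hη1 : η < 1)
    (ha : 1 - η ≤ a) (hb : 0 ≤ b) (hab : a + b = 1) (hv : 0 < v) (hw : 0 ≤ w)
    (hbw : w = 0 → b = 0) :
    a * log v - a * log a + (b * log w - b * log b) ≤
      (1 - η) * log v + η * log (v + w) - η * log η - (1 - η) * log (1 - η) := by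
  have hη1' : 0 < 1 - η := by linarith
  have hηlog : η * log η ≤ 0 :=
    mul_nonpos_of_nonneg_of_nonpos hη0.le (log_nonpos hη0.le hη1.le)
  rcases le_or_gt ((1 - η) * (v + w)) v with hcase | hcase
  · -- Gibbs gives `LHS ≤ log (v + w)`, and `RHS ≥ log (v + w) - η log η` here
    have hgibbs := gibbs_le_log_add (by linarith) hb hab hv hw hbw
    have hlog : log (1 - η) + log (v + w) ≤ log v := by
      rw [← log_mul hη1'.ne' (by linarith)]
      exact log_le_log (by positivity) hcase
    have hgap := mul_nonneg hη1'.le (sub_nonneg.2 hlog)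
    linarith
  · -- here `v / (1 - η) ≤ w / η`
    have hw_pos : 0 < w := by nlinarith
    have hgibbs := gibbs_le_log_add (by linarith) hb hab hη1' hη0.le fun h => absurd h hη0.ne'
    rw [sub_add_cancel, log_one] at hgibbs
    have hratio : log v - log (1 - η) ≤ log w - log η := by
      rw [← log_div hv.ne' hη1'.ne', ← log_div hw_pos.ne' hη0.ne']
      refine log_le_log (by positivity) ?_
      rw [div_le_div_iff₀ hη1' hη0]
      nlinarith
    have hshift := mul_le_mul_of_nonneg_left hratio (show 0 ≤ η - b by linarith)
    have hwlog :=
      mul_le_mul_of_nonneg_left (log_le_log hw_pos (le_add_of_nonneg_left hv.le)) hη0.le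
    obtain rfl : a = 1 - b := by linarith
    linarith

end Real

section

variable {α : Type*} [MeasurableSpace α] {ν : Measure α} {f : α → ℝ} {s t : Set α}

theorem neg_setIntegral_mul_log_le (hfnn : ∀ᵐ x ∂ν.restrict s, 0 ≤ f x) (hs : ν s ≠ ⊤)
    (hfi : IntegrableOn f s ν) (hfi_log : IntegrableOn (fun x => f x * log (f x)) s ν) :
    -∫ x in s, f x * log (f x) ∂ν ≤
      (∫ x in s, f x ∂ν) * log (ν.real s) -
        (∫ x in s, f x ∂ν) * log (∫ x in s, f x ∂ν) := by
  by_cases hs0 : ν s = 0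
  · simp [Measure.restrict_eq_zero.2 hs0]
  have hJensen := convexOn_mul_log.map_set_average_le continuous_mul_log.continuousOn isClosed_Ici
    hs0 hs hfnn hfi hfi_log
  set m := ν.real s
  set I := ∫ x in s, f x ∂ν
  have hm : 0 < m := ENNReal.toReal_pos hs0 hs
  rw [setAverage_eq, setAverage_eq, smul_eq_mul, smul_eq_mul, inv_mul_eq_div, inv_mul_eq_div,
    le_div_iff₀ hm] at hJensen
  have hlog : I * log (I / m) = I * log I - I * log m := by
    rcases eq_or_ne I 0 with hI | hI
    · simp [hI]
    · rw [log_div hI hm.ne']; ring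
  have hscale : I / m * log (I / m) * m = I * log (I / m) := by field_simp
  linarith

theorem measureReal_withDensity_ofReal (hf : AEStronglyMeasurable f ν) (hfnn : 0 ≤ᵐ[ν] f)
    (hs : MeasurableSet s) :
    (ν.withDensity (fun x => ENNReal.ofReal (f x))).real s = ∫ x in s, f x ∂ν := by
  rw [measureReal_def, withDensity_apply _ hs,
    integral_eq_lintegral_of_nonneg_ae (ae_restrict_of_ae hfnn) hf.restrict]

theorem ae_eq_zero_of_withDensity_ofReal_compl (hf : AEMeasurable f ν) (hfnn : 0 ≤ᵐ[ν] f)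
    (hsupp : ν.withDensity (fun x => ENNReal.ofReal (f x)) sᶜ = 0) :
    ∀ᵐ x ∂ν, x ∉ s → f x = 0 := by
  rw [withDensity_apply_eq_zero' hf.ennreal_ofReal] at hsupp
  filter_upwards [measure_eq_zero_iff_ae_notMem.1 hsupp, hfnn] with x hx hx0 hxs
  simp only [Set.mem_inter_iff, Set.mem_ofPred_eq, Set.mem_compl_iff, not_and, not_not] at hx
  exact le_antisymm (ENNReal.ofReal_eq_zero.1 (not_not.1 (mt hx hxs))) hx0

theorem integrable_of_isFiniteMeasure_withDensity_ofReal (hf : AEStronglyMeasurable f ν)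
    (hfnn : 0 ≤ᵐ[ν] f) [IsFiniteMeasure (ν.withDensity (fun x => ENNReal.ofReal (f x)))] :
    Integrable f ν := by
  refine ⟨hf, (hasFiniteIntegral_iff_ofReal hfnn).2 ?_⟩
  rw [← setLIntegral_univ, ← withDensity_apply _ MeasurableSet.univ]
  exact measure_lt_top _ _

theorem neg_integral_mul_log_le_of_withDensity (hf : AEStronglyMeasurable f ν)
    (hfnn : 0 ≤ᵐ[ν] f) (μ : Measure α) [IsFiniteMeasure μ]
    (hμ : μ = ν.withDensity (fun x => ENNReal.ofReal (f x))) (hs : MeasurableSet s)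
    (ht : MeasurableSet t) (hst : Disjoint s t) (hsupp : μ (s ∪ t)ᶜ = 0) (hνs : ν s ≠ ⊤)
    (hνt : ν t ≠ ⊤) (hint : Integrable (fun x => f x * log (f x)) ν) :
    -∫ x, f x * log (f x) ∂ν ≤
      (μ.real s * log (ν.real s) - μ.real s * log (μ.real s)) +
      (μ.real t * log (ν.real t) - μ.real t * log (μ.real t)) := by
  subst hμ
  have hvanish := ae_eq_zero_of_withDensity_ofReal_compl hf.aemeasurable hfnn hsupp
  have hsplit : ∫ x, f x * log (f x) ∂ν =
      (∫ x in s, f x * log (f x) ∂ν) + ∫ x in t, f x * log (f x) ∂ν := by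
    rw [← setIntegral_union hst ht hint.integrableOn hint.integrableOn,
      setIntegral_eq_integral_of_ae_compl_eq_zero]
    filter_upwards [hvanish] with x hx hxst
    simp [hx hxst]
  have hfi := integrable_of_isFiniteMeasure_withDensity_ofReal hf hfnn
  rw [hsplit, neg_add, measureReal_withDensity_ofReal hf hfnn hs,
    measureReal_withDensity_ofReal hf hfnn ht]
  exact add_le_add
    (neg_setIntegral_mul_log_le (ae_restrict_of_ae hfnn) hνs hfi.integrableOn hint.integrableOn)
    (neg_setIntegral_mul_log_le (ae_restrict_of_ae hfnn) hνt hfi.integrableOn hint.integrableOn)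

end

theorem entropy_concentration_bound_general
    {d : ℕ} (E F : Set (Fin d → ℝ)) (hE : MeasurableSet E) (hF : MeasurableSet F)
    (hFE : F ⊆ E) (hEfin : volume E < ⊤)
    (η : ℝ) (hη0 : 0 < η) (hη1 : η < 1)
    (f : (Fin d → ℝ) → ℝ) (hf : Measurable f) (hfnn : ∀ x, 0 ≤ f x)
    (μ : Measure (Fin d → ℝ)) [IsProbabilityMeasure μ]
    (hμ : μ = volume.withDensity (fun x => ENNReal.ofReal (f x)))
    (hsupp : μ Eᶜ = 0)
    (hμF : 1 - η ≤ (μ F).toReal)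
    (hint : Integrable (fun x => f x * Real.log (f x))) :
    -∫ x, f x * Real.log (f x) ≤
      (1 - η) * Real.log ((volume F).toReal) + η * Real.log ((volume E).toReal)
        - η * Real.log η - (1 - η) * Real.log (1 - η) := by
  simp only [← measureReal_def] at hμF ⊢
  have hFfin : volume F ≠ ⊤ := measure_ne_top_of_subset hFE hEfin.ne
  have hEFfin : volume (E \ F) ≠ ⊤ := measure_ne_top_of_subset Set.sdiff_subset hEfin.ne
  refine (neg_integral_mul_log_le_of_withDensity hf.aestronglyMeasurable (ae_of_all _ hfnn) μ hμ
    hF (hE.diff hF) Set.disjoint_sdiff_right (by rwa [Set.union_sdiff_cancel hFE]) hFfin hEFfin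
    hint).trans ?_
  have hac : μ ≪ volume := hμ ▸ withDensity_absolutelyContinuous _ _
  have hmasses : μ.real F + μ.real (E \ F) = 1 := by
    rw [measureReal_add_sdiff hF, Set.union_eq_right.2 hFE, measureReal_def,
      (prob_compl_eq_zero_iff hE).1 hsupp, ENNReal.toReal_one]
  have hvols : volume.real F + volume.real (E \ F) = volume.real E := by
    rw [measureReal_add_sdiff hF hFfin hEfin.ne, Set.union_eq_right.2 hFE]
  have hv : 0 < volume.real F := by
    refine ENNReal.toReal_pos (fun h => ?_) hFfin
    rw [(measureReal_eq_zero_iff (measure_ne_top μ _)).2 (hac h)] at hμF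
    linarith
  have hbw (h : volume.real (E \ F) = 0) : μ.real (E \ F) = 0 :=
    (measureReal_eq_zero_iff (measure_ne_top μ _)).2 (hac ((measureReal_eq_zero_iff hEFfin).1 h))
  rw [← hvols]
  exact split_entropy_le_of_mass_ge hη0 hη1 hμF measureReal_nonneg hmasses hv measureReal_nonneg
    hbw

/-- entropy estimate for a probability measure putting mass at
least `1 - η` on a subset `F` of `E`. -/
theorem entropy_concentration_bound
    {d : ℕ} (E F : Set (Fin d → ℝ)) (hE : MeasurableSet E) (hF : MeasurableSet F)
    (hFE : F ⊆ E) (hEpos : 0 < volume E) (hEfin : volume E < ⊤)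
    (hFle : volume F ≤ volume E)
    (η : ℝ) (hη0 : 0 < η) (hη1 : η < 1)
    (f : (Fin d → ℝ) → ℝ) (hf : Measurable f) (hfnn : ∀ x, 0 ≤ f x)
    (μ : Measure (Fin d → ℝ)) [IsProbabilityMeasure μ]
    (hμ : μ = volume.withDensity (fun x => ENNReal.ofReal (f x)))
    (hsupp : μ Eᶜ = 0)
    (hμF : 1 - η ≤ (μ F).toReal)
    (hint : Integrable (fun x => f x * Real.log (f x))) :
    -∫ x, f x * Real.log (f x) ≤
      (1 - η) * Real.log ((volume F).toReal) + η * Real.log ((volume E).toReal)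
        - η * Real.log η - (1 - η) * Real.log (1 - η) :=
  entropy_concentration_bound_general E F hE hF hFE hEfin η hη0 hη1 f hf hfnn μ hμ hsupp hμF hint
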